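/- Let (Ω, μ) be a probability space and let X : Fin n → Ω → ℝ be measurable random variables that are independent (ProbabilityTheory.iIndepFun) with Measure.map (X i) μ = ProbabilityTheory.gaussianReal 0 1 for every i (standard Gaussians). Let a : Fin n → ℝ, let S be a subset (Finset) of Fin n, and set Σ₁ := Σ_{i ∈ S} a_i² and Σ₂ := Σ_{i ∉ S} a_i². Then for every natural number q ≥ 2, ∫ ( √(Σ_{i ∈ S} a_i² · (X i ω)²) · √(Σ_{i ∉ S} a_i² · (X i ω)²) )^q dμ(ω) ≤ q! · (2 · √(Σ₁ · Σ₂))^q. -/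

import Mathlib

/-!
With `A = ∑_{i ∈ S} aᵢ² Xᵢ²` and `B = ∑_{i ∉ S} aᵢ² Xᵢ²`, AM-GM gives
`√A √B ≤ √(σ₁σ₂) · (A/σ₁ + B/σ₂)/2`, and `(A/σ₁ + B/σ₂)/2 = ∑ᵢ wᵢ Xᵢ²` is a convex combination of
the `Xᵢ²`, with weight `aᵢ²/(2σ₁)` on `S` and `aᵢ²/(2σ₂)` off `S`. By Jensen its `q`-th power is at
most `∑ᵢ wᵢ Xᵢ^{2q}`, whose expectation is the Gaussian moment `(2q-1)‼ ≤ 2^q q!`.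
-/

open MeasureTheory ProbabilityTheory Real Finset
open scoped Nat NNReal

lemma integral_pow_two_mul_mul_exp_neg_sq_div_two (k : ℕ) :
    ∫ x : ℝ, x ^ (2 * k) * rexp (-x ^ 2 / 2) = √(2 * π) * (2 * k - 1 : ℕ)‼ := by
  have hIoi : ∫ x in Set.Ioi (0 : ℝ), x ^ (2 * k) * rexp (-x ^ 2 / 2)
      = (1 / 2 : ℝ) ^ (-((2 * k : ℝ) + 1) / 2) * (1 / 2) * Gamma (k + 1 / 2) := by
    have h := integral_rpow_mul_exp_neg_mul_rpow (p := 2) (q := 2 * k) (b := 1 / 2)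
      two_pos (by linarith [k.cast_nonneg (α := ℝ)]) one_half_pos
    rw [show ((2 * k : ℝ) + 1) / 2 = k + 1 / 2 by ring] at h
    rw [← h]
    refine setIntegral_congr_fun measurableSet_Ioi fun x _ => ?_
    norm_cast
    ring_nf
  calc ∫ x : ℝ, x ^ (2 * k) * rexp (-x ^ 2 / 2)
      = ∫ x : ℝ, |x| ^ (2 * k) * rexp (-|x| ^ 2 / 2) := by simp [pow_mul]
    _ = 2 * ((1 / 2 : ℝ) ^ (-((2 * k : ℝ) + 1) / 2) * (1 / 2) * Gamma (k + 1 / 2)) := by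
      rw [integral_comp_abs (f := fun x => x ^ (2 * k) * rexp (-x ^ 2 / 2)), hIoi]
    _ = √(2 * π) * (2 * k - 1 : ℕ)‼ := by
      rw [Gamma_nat_add_half, one_div, inv_rpow zero_le_two, ← rpow_neg zero_le_two, neg_div,
        neg_neg, add_div, mul_div_cancel_left₀ _ two_ne_zero, rpow_add two_pos, rpow_natCast,
        ← sqrt_eq_rpow, sqrt_mul zero_le_two]
      field_simp

namespace ProbabilityTheory

lemma integral_pow_two_mul_gaussianReal (k : ℕ) :
    ∫ x, x ^ (2 * k) ∂gaussianReal 0 1 = (2 * k - 1 : ℕ)‼ := by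
  have hpdf : ∀ x, gaussianPDFReal 0 1 x = (√(2 * π))⁻¹ * rexp (-x ^ 2 / 2) := by
    simp [gaussianPDFReal]
  simp_rw [integral_gaussianReal_eq_integral_smul one_ne_zero, hpdf, smul_eq_mul, mul_assoc,
    integral_const_mul, mul_comm (rexp _), integral_pow_two_mul_mul_exp_neg_sq_div_two]
  field_simp

lemma integrable_pow_gaussianReal (μ : ℝ) (v : ℝ≥0) (k : ℕ) :
    Integrable (fun x => x ^ k) (gaussianReal μ v) :=
  (memLp_id_gaussianReal k).integrable_norm_pow'.mono' (by fun_prop)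
    (ae_of_all _ fun x => by simp [norm_pow])

variable {Ω : Type*} [MeasurableSpace Ω] {P : Measure Ω} {X : Ω → ℝ}

lemma HasLaw.integrable_pow_of_gaussianReal {μ : ℝ} {v : ℝ≥0} (hX : HasLaw X (gaussianReal μ v) P)
    (k : ℕ) : Integrable (fun ω => X ω ^ k) P :=
  (integrable_map_measure (g := fun x : ℝ => x ^ k) (continuous_pow k).aestronglyMeasurable
    hX.aemeasurable).mp (hX.map_eq ▸ integrable_pow_gaussianReal μ v k)

lemma HasLaw.integral_pow_two_mul_of_gaussianReal (hX : HasLaw X (gaussianReal 0 1) P) (k : ℕ) :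
    ∫ ω, X ω ^ (2 * k) ∂P = (2 * k - 1 : ℕ)‼ :=
  (hX.integral_comp (f := fun x : ℝ => x ^ (2 * k)) (by fun_prop)).trans
    (integral_pow_two_mul_gaussianReal k)

end ProbabilityTheory

lemma Nat.doubleFactorial_two_mul_sub_one_le (k : ℕ) : (2 * k - 1)‼ ≤ 2 ^ k * k ! := by
  induction k with
  | zero => simp
  | succ k ih =>
    rw [show 2 * (k + 1) - 1 = 2 * k + 1 by omega, Nat.doubleFactorial_add_one,
      Nat.factorial_succ, pow_succ]
    calc (2 * k + 1) * (2 * k - 1)‼ ≤ (2 * (k + 1)) * (2 ^ k * k !) := by gcongr; omega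
      _ = 2 ^ k * 2 * ((k + 1) * k !) := by ring

lemma Real.sqrt_mul_sqrt_le_sqrt_mul_mul_add_div {A B s t : ℝ} (hA : 0 ≤ A) (hB : 0 ≤ B)
    (hs : 0 < s) (ht : 0 < t) : √A * √B ≤ √(s * t) * ((A / s + B / t) / 2) := by
  have hamgm := two_mul_le_add_sq √(A / s) √(B / t)
  rw [sq_sqrt (div_nonneg hA hs.le), sq_sqrt (div_nonneg hB ht.le)] at hamgm
  calc √A * √B = √(s * t) * (√(A / s) * √(B / t)) := by
        rw [sqrt_div' _ hs.le, sqrt_div' _ ht.le, sqrt_mul hs.le]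
        field_simp
    _ ≤ √(s * t) * ((A / s + B / t) / 2) := by gcongr; linarith

lemma Finset.sum_mul_eq_zero_of_sum_eq_zero {ι R : Type*} [Semiring R] [PartialOrder R]
    [IsOrderedAddMonoid R] {s : Finset ι} {f : ι → R}
    (hf : ∀ i ∈ s, 0 ≤ f i) (h : ∑ i ∈ s, f i = 0) (g : ι → R) : ∑ i ∈ s, f i * g i = 0 :=
  sum_eq_zero fun i hi => by rw [(sum_eq_zero_iff_of_nonneg hf).mp h i hi, zero_mul]

section SplitWeight

variable {ι : Type*} [Fintype ι] [DecidableEq ι]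

noncomputable def splitWeight (a : ι → ℝ) (S : Finset ι) (i : ι) : ℝ :=
  if i ∈ S then a i ^ 2 / (2 * ∑ j ∈ S, a j ^ 2) else a i ^ 2 / (2 * ∑ j ∈ Sᶜ, a j ^ 2)

lemma sum_splitWeight_mul (a : ι → ℝ) (S : Finset ι) (x : ι → ℝ) :
    ∑ i, splitWeight a S i * x i =
      ((∑ i ∈ S, a i ^ 2 * x i) / ∑ i ∈ S, a i ^ 2 +
        (∑ i ∈ Sᶜ, a i ^ 2 * x i) / ∑ i ∈ Sᶜ, a i ^ 2) / 2 := by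
  rw [← sum_add_sum_compl S, add_div, sum_div, sum_div, sum_div, sum_div]
  congr 1 <;> refine sum_congr rfl fun i hi => ?_
  · rw [splitWeight, if_pos hi]
    ring
  · rw [splitWeight, if_neg (mem_compl.mp hi)]
    ring

lemma sum_splitWeight {a : ι → ℝ} {S : Finset ι} (h₁ : ∑ i ∈ S, a i ^ 2 ≠ 0)
    (h₂ : ∑ i ∈ Sᶜ, a i ^ 2 ≠ 0) : ∑ i, splitWeight a S i = 1 := by
  simpa [h₁, h₂] using sum_splitWeight_mul a S 1

lemma sqrt_mul_sqrt_pow_le_sum_splitWeight_mul_pow {a : ι → ℝ} {S : Finset ι}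
    (h₁ : ∑ i ∈ S, a i ^ 2 ≠ 0) (h₂ : ∑ i ∈ Sᶜ, a i ^ 2 ≠ 0) (x : ι → ℝ) (q : ℕ) :
    (√(∑ i ∈ S, a i ^ 2 * x i ^ 2) * √(∑ i ∈ Sᶜ, a i ^ 2 * x i ^ 2)) ^ q ≤
      √((∑ i ∈ S, a i ^ 2) * ∑ i ∈ Sᶜ, a i ^ 2) ^ q *
        ∑ i, splitWeight a S i * x i ^ (2 * q) := by
  have hw : ∀ i ∈ univ, 0 ≤ splitWeight a S i := fun i _ => by
    unfold splitWeight; split_ifs <;> positivity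
  have hamgm := Real.sqrt_mul_sqrt_le_sqrt_mul_mul_add_div
    (sum_nonneg fun i _ => by positivity : 0 ≤ ∑ i ∈ S, a i ^ 2 * x i ^ 2)
    (sum_nonneg fun i _ => by positivity : 0 ≤ ∑ i ∈ Sᶜ, a i ^ 2 * x i ^ 2)
    ((sum_nonneg fun i _ => sq_nonneg (a i)).lt_of_ne' h₁)
    ((sum_nonneg fun i _ => sq_nonneg (a i)).lt_of_ne' h₂)
  rw [← sum_splitWeight_mul] at hamgm
  have hjensen := pow_arith_mean_le_arith_mean_pow univ _ (fun i => x i ^ 2) hw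
    (sum_splitWeight h₁ h₂) (fun i _ => sq_nonneg (x i)) q
  simp_rw [← pow_mul] at hjensen
  calc _ ≤ (√((∑ i ∈ S, a i ^ 2) * ∑ i ∈ Sᶜ, a i ^ 2) * ∑ i, splitWeight a S i * x i ^ 2) ^ q :=
        pow_le_pow_left₀ (by positivity) hamgm q
    _ ≤ _ := by rw [mul_pow]; gcongr

lemma sqrt_mul_sqrt_eq_zero_of_mul_eq_zero {a : ι → ℝ} {S : Finset ι}
    (h : (∑ i ∈ S, a i ^ 2) * ∑ i ∈ Sᶜ, a i ^ 2 = 0) (x : ι → ℝ) :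
    √(∑ i ∈ S, a i ^ 2 * x i) * √(∑ i ∈ Sᶜ, a i ^ 2 * x i) = 0 := by
  rcases mul_eq_zero.mp h with h | h <;>
    simp [sum_mul_eq_zero_of_sum_eq_zero (fun i _ => sq_nonneg (a i)) h]

end SplitWeight

theorem gaussian_split_moment_bound_general {Ω : Type*} [MeasurableSpace Ω] (μ : Measure Ω)
    [IsProbabilityMeasure μ] {n : ℕ} (X : Fin n → Ω → ℝ)
    (hXm : ∀ i, Measurable (X i))
    (hgauss : ∀ i, Measure.map (X i) μ = gaussianReal 0 1)
    (a : Fin n → ℝ) (S : Finset (Fin n)) (q : ℕ) :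
    ∫ ω, (Real.sqrt (∑ i ∈ S, a i ^ 2 * X i ω ^ 2) *
            Real.sqrt (∑ i ∈ Sᶜ, a i ^ 2 * X i ω ^ 2)) ^ q ∂μ ≤
      (q.factorial : ℝ) *
        (2 * Real.sqrt ((∑ i ∈ S, a i ^ 2) * ∑ i ∈ Sᶜ, a i ^ 2)) ^ q := by
  set σ₁ := ∑ i ∈ S, a i ^ 2
  set σ₂ := ∑ i ∈ Sᶜ, a i ^ 2
  by_cases hdeg : σ₁ * σ₂ = 0
  · simp only [sqrt_mul_sqrt_eq_zero_of_mul_eq_zero hdeg, hdeg, sqrt_zero, mul_zero,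
      integral_const, probReal_univ, one_smul]
    exact le_mul_of_one_le_left (by positivity) (mod_cast q.factorial_pos)
  obtain ⟨hσ₁, hσ₂⟩ := mul_ne_zero_iff.mp hdeg
  have hlaw (i : Fin n) : HasLaw (X i) (gaussianReal 0 1) μ := ⟨(hXm i).aemeasurable, hgauss i⟩
  have hint (i : Fin n) : Integrable (fun ω => splitWeight a S i * X i ω ^ (2 * q)) μ :=
    ((hlaw i).integrable_pow_of_gaussianReal _).const_mul _
  calc _ ≤ ∫ ω, √(σ₁ * σ₂) ^ q * ∑ i, splitWeight a S i * X i ω ^ (2 * q) ∂μ :=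
        integral_mono_of_nonneg (ae_of_all _ fun ω => by positivity)
          ((integrable_finsetSum _ fun i _ => hint i).const_mul _)
          (ae_of_all _ fun ω => sqrt_mul_sqrt_pow_le_sum_splitWeight_mul_pow hσ₁ hσ₂ (X · ω) q)
    _ = √(σ₁ * σ₂) ^ q * (2 * q - 1 : ℕ)‼ := by
      simp_rw [integral_const_mul, integral_finsetSum _ fun i _ => hint i, integral_const_mul,
        (hlaw _).integral_pow_two_mul_of_gaussianReal, ← sum_mul, sum_splitWeight hσ₁ hσ₂, one_mul]
    _ ≤ √(σ₁ * σ₂) ^ q * (2 ^ q * q !) := by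
      gcongr
      exact_mod_cast Nat.doubleFactorial_two_mul_sub_one_le q
    _ = q ! * (2 * √(σ₁ * σ₂)) ^ q := by ring

/-- Moment bound for the product of the norms of the two projections of a Gaussian
random feature: for independent standard Gaussians `X i` and every `q ≥ 2`,
`E[(√(Σ_{i∈S} a_i² X_i²) · √(Σ_{i∉S} a_i² X_i²))^q] ≤ q! (2 √(Σ₁ Σ₂))^q`, where
`Σ₁ = Σ_{i∈S} a_i²` and `Σ₂ = Σ_{i∉S} a_i²`. -/
theorem gaussian_split_moment_bound {Ω : Type*} [MeasurableSpace Ω] (μ : Measure Ω)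
    [IsProbabilityMeasure μ] {n : ℕ} (X : Fin n → Ω → ℝ)
    (hXm : ∀ i, Measurable (X i))
    (hindep : iIndepFun X μ)
    (hgauss : ∀ i, Measure.map (X i) μ = gaussianReal 0 1)
    (a : Fin n → ℝ) (S : Finset (Fin n)) (q : ℕ) (hq : 2 ≤ q) :
    ∫ ω, (Real.sqrt (∑ i ∈ S, a i ^ 2 * X i ω ^ 2) *
            Real.sqrt (∑ i ∈ Sᶜ, a i ^ 2 * X i ω ^ 2)) ^ q ∂μ ≤
      (q.factorial : ℝ) *
        (2 * Real.sqrt ((∑ i ∈ S, a i ^ 2) * ∑ i ∈ Sᶜ, a i ^ 2)) ^ q :=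
  gaussian_split_moment_bound_general μ X hXm hgauss a S q
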